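/- arXiv:math/0603058 — 5 statements merged into one kernel-verified Lean document; each statement's English description precedes it below -/
import Mathlib

section
/- The SHR xorshift transformation T has maximal period: for every nonzero 32-bit word x, the least positive integer n such that the n-fold iterate T^[n](x) equals x is 2^32 − 1. -/
/-! `T` is linear over `𝔽₂`, hence given by a `32 × 32` matrix `M` over `𝔽₂`. Let
`N = 2 ^ 32 - 1 = 3 · 5 · 17 · 257 · 65537`. If `M ^ N = 1` and `M ^ (N / p) + 1` is invertible for
each of these five primes `p`, then no nonzero word is fixed by `T^[N / p]`, so every nonzero word
has minimal period exactly `N`. Both facts are checked by kernel computation, the five inverses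
being supplied as certificates. -/

def T (x : BitVec 32) : BitVec 32 :=
  let y₁ := x ^^^ (x <<< 13)
  let y₂ := y₁ ^^^ (y₁ >>> 17)
  y₂ ^^^ (y₂ <<< 5)

namespace Function

variable {α : Type*} {f : α → α} {x : α} {n : ℕ}

theorem isLeast_minimalPeriod (hx : x ∈ periodicPts f) :
    IsLeast {n | 0 < n ∧ f^[n] x = x} (minimalPeriod f x) :=
  ⟨⟨minimalPeriod_pos_of_mem_periodicPts hx, iterate_minimalPeriod⟩,
    fun _ ⟨hn, h⟩ => IsPeriodicPt.minimalPeriod_le hn h⟩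

theorem minimalPeriod_eq_of_not_isPeriodicPt_div_prime (h : IsPeriodicPt f n x)
    (hdiv : ∀ p : ℕ, p.Prime → p ∣ n → ¬IsPeriodicPt f (n / p) x) :
    minimalPeriod f x = n := by
  obtain ⟨k, hk⟩ := h.minimalPeriod_dvd
  by_contra hne
  obtain ⟨p, hp, hpk⟩ := Nat.exists_prime_and_dvd (show k ≠ 1 by rintro rfl; simp [hk] at hne)
  refine hdiv p hp (hk ▸ dvd_mul_of_dvd_right hpk _)
    ((isPeriodicPt_minimalPeriod f x).trans_dvd ?_)
  rw [hk, Nat.mul_div_assoc _ hpk]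
  exact dvd_mul_right _ _

end Function

namespace BitVec

variable {w : ℕ}

theorem xor_xor_xor_comm (a b c d : BitVec w) :
    (a ^^^ b) ^^^ (c ^^^ d) = (a ^^^ c) ^^^ (b ^^^ d) := by
  ac_rfl

theorem map_zero_of_map_xor {f : BitVec w → BitVec w} (hf : ∀ a b, f (a ^^^ b) = f a ^^^ f b) :
    f 0 = 0 := by
  simpa using hf 0 0

theorem ushiftRight_shiftLeft_eq_xor_succ (x : BitVec w) (i : ℕ) :
    x >>> i <<< i = (if x.getLsbD i then 1#w <<< i else 0) ^^^ x >>> (i + 1) <<< (i + 1) := by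
  ext j hj
  rcases Nat.lt_trichotomy j i with hji | rfl | hji
  · split <;> simp [hji, hji.le]
  · split <;> simp_all [← getLsbD_eq_getElem, Nat.zero_lt_of_lt hj]
  · have : i + 1 + (j - (i + 1)) = j := by omega
    have : i + (j - i) = j := by omega
    split <;> simp [*, Nat.not_le_of_gt hji, Nat.not_lt_of_gt hji, Nat.sub_ne_zero_of_lt hji]

end BitVec

/-- A `w × w` matrix over `𝔽₂`, stored as the list of its columns as words; column `i` is the
image of the unit word `1#w <<< i`. -/
abbrev BitMatrix (w : ℕ) := List (BitVec w)

namespace BitMatrix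

variable {w : ℕ}

/-- The sum of the columns of `A` selected by the bits of `x`, the first column being paired with
bit `i`. -/
def mulVecFrom : BitMatrix w → ℕ → BitVec w → BitVec w
  | [], _, _ => 0
  | c :: A, i, x => (if x.getLsbD i then c else 0) ^^^ mulVecFrom A (i + 1) x

def mulVec (A : BitMatrix w) (x : BitVec w) : BitVec w := A.mulVecFrom 0 x

def ofFun (w : ℕ) (f : BitVec w → BitVec w) : BitMatrix w :=
  (List.range w).map fun i => f (1#w <<< i)

def one : BitMatrix w := ofFun w id

def mul (A B : BitMatrix w) : BitMatrix w := B.map A.mulVec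

/-- Square-and-multiply with fuel `k`: as `n` halves at each step, the recursion depth is the bit
length of `n`, however large `k` is. -/
def powAux (A : BitMatrix w) : ℕ → ℕ → BitMatrix w
  | 0, _ => one
  | k + 1, n =>
    if n = 0 then one else
      let B := powAux A k (n / 2)
      if n % 2 = 1 then A.mul (B.mul B) else B.mul B

def pow (A : BitMatrix w) (n : ℕ) : BitMatrix w := A.powAux n n

theorem mulVecFrom_xor (A : BitMatrix w) (i : ℕ) (x y : BitVec w) :
    A.mulVecFrom i (x ^^^ y) = A.mulVecFrom i x ^^^ A.mulVecFrom i y := by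
  induction A generalizing i with
  | nil => simp [mulVecFrom]
  | cons c A ih =>
    rw [mulVecFrom, mulVecFrom, mulVecFrom, ih, BitVec.xor_xor_xor_comm, BitVec.getLsbD_xor]
    congr 1
    cases x.getLsbD i <;> cases y.getLsbD i <;> simp

theorem mulVec_xor (A : BitMatrix w) (x y : BitVec w) :
    A.mulVec (x ^^^ y) = A.mulVec x ^^^ A.mulVec y :=
  A.mulVecFrom_xor 0 x y

theorem mulVecFrom_map {f : BitVec w → BitVec w} (hf : ∀ a b, f (a ^^^ b) = f a ^^^ f b)
    (A : BitMatrix w) (i : ℕ) (x : BitVec w) :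
    mulVecFrom (A.map f) i x = f (A.mulVecFrom i x) := by
  induction A generalizing i with
  | nil => exact (BitVec.map_zero_of_map_xor hf).symm
  | cons c A ih =>
    rw [List.map_cons, mulVecFrom, mulVecFrom, ih, hf]
    split
    · rfl
    · rw [BitVec.map_zero_of_map_xor hf]

theorem mulVecFrom_unit_columns (x : BitVec w) :
    ∀ n i, w ≤ i + n → mulVecFrom ((List.range' i n).map (1#w <<< ·)) i x = x >>> i <<< i
  | 0, i, h => by
    simp [mulVecFrom, BitVec.ushiftRight_eq_zero (show w ≤ i by omega)]
  | n + 1, i, h => by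
    rw [List.range'_succ, List.map_cons, mulVecFrom, mulVecFrom_unit_columns x n (i + 1) (by omega),
      BitVec.ushiftRight_shiftLeft_eq_xor_succ x i]

theorem mulVec_ofFun {f : BitVec w → BitVec w} (hf : ∀ a b, f (a ^^^ b) = f a ^^^ f b) :
    (ofFun w f).mulVec = f := by
  funext x
  have hcols : ofFun w f = ((List.range' 0 w).map (1#w <<< ·)).map f := by
    rw [ofFun, List.range_eq_range', List.map_map]
    rfl
  rw [mulVec, hcols, mulVecFrom_map hf, mulVecFrom_unit_columns x w 0 (by omega)]
  simp

theorem mulVec_one : (one : BitMatrix w).mulVec = id :=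
  mulVec_ofFun fun _ _ => rfl

theorem mulVec_mul (A B : BitMatrix w) (x : BitVec w) :
    (A.mul B).mulVec x = A.mulVec (B.mulVec x) :=
  mulVecFrom_map A.mulVec_xor B 0 x

theorem mulVec_powAux (A : BitMatrix w) : ∀ k n, n ≤ k → (A.powAux k n).mulVec = A.mulVec^[n]
  | 0, n, hn => by
    obtain rfl : n = 0 := by omega
    exact mulVec_one
  | k + 1, n, hn => by
    have ih := A.mulVec_powAux k (n / 2) (by omega)
    funext x
    rw [powAux]
    split_ifs with h0 hodd
    · subst h0
      exact congrFun mulVec_one x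
    · rw [mulVec_mul, mulVec_mul, ih, ← Function.iterate_add_apply,
        ← Function.iterate_succ_apply' A.mulVec]
      congr 1
      omega
    · rw [mulVec_mul, ih, ← Function.iterate_add_apply]
      congr 1
      omega

theorem mulVec_pow (A : BitMatrix w) (n : ℕ) : (A.pow n).mulVec = A.mulVec^[n] :=
  A.mulVec_powAux n n le_rfl

/-- `hB` says `B * (A + 1) = 1`, checked on the unit words. -/
theorem eq_zero_of_mulVec_eq_self {A B : BitMatrix w}
    (hB : ofFun w (fun x => B.mulVec (A.mulVec x ^^^ x)) = one) {x : BitVec w}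
    (hx : A.mulVec x = x) : x = 0 := by
  have hlin : ∀ a b : BitVec w, B.mulVec (A.mulVec (a ^^^ b) ^^^ (a ^^^ b)) =
      B.mulVec (A.mulVec a ^^^ a) ^^^ B.mulVec (A.mulVec b ^^^ b) := by
    intro a b
    simp only [mulVec_xor]
    ac_rfl
  have := congrFun (congrArg mulVec hB) x
  rw [mulVec_ofFun hlin, mulVec_one, hx, BitVec.xor_self] at this
  exact this.symm.trans (BitVec.map_zero_of_map_xor B.mulVec_xor)

end BitMatrix

open Function

theorem T_xor (a b : BitVec 32) : T (a ^^^ b) = T a ^^^ T b := by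
  have hl (x y : BitVec 32) (n : ℕ) :
      (x ^^^ y) ^^^ (x ^^^ y) <<< n = (x ^^^ x <<< n) ^^^ (y ^^^ y <<< n) := by
    rw [BitVec.shiftLeft_xor_distrib, BitVec.xor_xor_xor_comm]
  have hr (x y : BitVec 32) (n : ℕ) :
      (x ^^^ y) ^^^ (x ^^^ y) >>> n = (x ^^^ x >>> n) ^^^ (y ^^^ y >>> n) := by
    rw [BitVec.ushiftRight_xor_distrib, BitVec.xor_xor_xor_comm]
  simp only [T, hl, hr]

def shr3Matrix : BitMatrix 32 := .ofFun 32 T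

theorem mulVec_shr3Matrix : shr3Matrix.mulVec = T :=
  BitMatrix.mulVec_ofFun T_xor

theorem shr3Matrix_pow_eq_one : shr3Matrix.pow (2 ^ 32 - 1) = .one := by
  decide +kernel

theorem T_iterate_eq_id : T^[2 ^ 32 - 1] = id := by
  rw [← mulVec_shr3Matrix, ← BitMatrix.mulVec_pow, shr3Matrix_pow_eq_one, BitMatrix.mulVec_one]

theorem primeFactorsList_two_pow_32_sub_one :
    (2 ^ 32 - 1).primeFactorsList = [3, 5, 17, 257, 65537] := by
  rw [show 2 ^ 32 - 1 = 4294967295 by norm_num]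
  simp

/-- For `p ∣ 2 ^ 32 - 1` prime, the inverse of `shr3Matrix.pow ((2 ^ 32 - 1) / p) + 1`, computed
externally. -/
def shr3Certificate : ℕ → BitMatrix 32
  | 3 =>
    [3335786257#32, 3906425407#32, 341432259#32, 3494094572#32, 1287699228#32, 2747661528#32,
     2150333198#32, 1082698387#32, 2611265886#32, 3557500517#32, 3637289613#32, 2868896625#32,
     410369362#32, 1269330915#32, 4088754115#32, 154103209#32, 1548993245#32, 1491119919#32,
     2404261344#32, 3419380581#32, 2808848906#32, 551830956#32, 2331709170#32, 188466835#32,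
     3017353089#32, 1526152647#32, 441219537#32, 2121271239#32, 792014187#32, 2569338613#32,
     2655281178#32, 105270877#32]
  | 5 =>
    [3037765269#32, 3182012677#32, 1669387622#32, 2344659563#32, 370929321#32, 3901211764#32,
     1380852402#32, 4210098316#32, 2969553326#32, 2348631362#32, 1854761326#32, 1663573681#32,
     1840518332#32, 1230994099#32, 4206056119#32, 2280264177#32, 2761711817#32, 2141840559#32,
     1783100198#32, 2364816481#32, 1110627307#32, 3500024705#32, 2915665707#32, 311039995#32,
     1912523766#32, 1756755554#32, 3294084956#32, 326808620#32, 2100464665#32, 1580234416#32,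
     2287416289#32, 4045495915#32]
  | 17 =>
    [2080738118#32, 4098161938#32, 4167003272#32, 262081113#32, 4280086534#32, 4185094329#32,
     2355677745#32, 3596925114#32, 3587069701#32, 2535039379#32, 1691659854#32, 3661366594#32,
     3081963516#32, 2254921635#32, 205510780#32, 2576529806#32, 3889960224#32, 3965609850#32,
     1675181996#32, 1663335326#32, 464242227#32, 164803375#32, 1135727768#32, 3702832275#32,
     733074617#32, 3475373130#32, 3364815054#32, 2204756806#32, 2769922784#32, 2141131413#32,
     4189123440#32, 1776631044#32]
  | 257 =>
    [1940479401#32, 668616311#32, 607776604#32, 3685168204#32, 1129029766#32, 648810898#32,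
     3303171155#32, 235886680#32, 3828553010#32, 2674952864#32, 3259775758#32, 1952802776#32,
     3122666590#32, 807405955#32, 2074935119#32, 10541013#32, 2953885123#32, 3744595128#32,
     1051926783#32, 353530678#32, 151549380#32, 394224902#32, 2319156462#32, 238374970#32,
     180587326#32, 3341967654#32, 1264618217#32, 3233456239#32, 2630374898#32, 2982569044#32,
     4209708186#32, 2989590033#32]
  | 65537 =>
    [331728430#32, 2488218541#32, 1209385696#32, 682878283#32, 839817293#32, 1408035726#32,
     4013029473#32, 4095696576#32, 1033618122#32, 2301755989#32, 769798078#32, 4185028050#32,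
     2663489015#32, 2683529367#32, 4136185144#32, 2950586883#32, 1578865829#32, 2816851372#32,
     349201241#32, 3096975940#32, 3937016935#32, 2625434786#32, 2636012314#32, 211073125#32,
     3311055944#32, 1920044434#32, 2025742764#32, 2060168078#32, 4064662879#32, 1177042686#32,
     3953608156#32, 586778632#32]
  | _ => []

theorem shr3Certificate_spec : ∀ p ∈ (2 ^ 32 - 1).primeFactorsList, BitMatrix.ofFun 32
    (fun x => (shr3Certificate p).mulVec ((shr3Matrix.pow ((2 ^ 32 - 1) / p)).mulVec x ^^^ x)) =
      .one := by
  rw [primeFactorsList_two_pow_32_sub_one]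
  decide +kernel

/-- The SHR xorshift transformation has maximal period: for every nonzero 32-bit
word `x`, the least positive integer `n` with `T^[n] x = x` is `2^32 - 1`. -/
theorem shr3_xorshift_maximal_period (x : BitVec 32) (hx : x ≠ 0) :
    IsLeast {n : ℕ | 0 < n ∧ T^[n] x = x} (2 ^ 32 - 1) := by
  have hperiodic : IsPeriodicPt T (2 ^ 32 - 1) x := congrFun T_iterate_eq_id x
  have hminimal : minimalPeriod T x = 2 ^ 32 - 1 := by
    refine minimalPeriod_eq_of_not_isPeriodicPt_div_prime hperiodic fun p hp hdvd hfixed => hx ?_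
    refine BitMatrix.eq_zero_of_mulVec_eq_self
      (shr3Certificate_spec p ((Nat.mem_primeFactorsList (by norm_num)).2 ⟨hp, hdvd⟩)) ?_
    rw [BitMatrix.mulVec_pow, mulVec_shr3Matrix]
    exact hfixed
  rw [← hminimal]
  exact isLeast_minimalPeriod (mk_mem_periodicPts (by norm_num) hperiodic)
end

section
/- The multiplicative congruential generator R of Matlab's randn has maximal period 2^32: for every element b of ZMod 2^32, the least positive integer n such that the n-fold iterate R^[n](b) equals b is 2^32. -/
/-!
Write `R y = a * y + c`. Then `R^[n] x - x = (1 + a + ⋯ + a ^ (n - 1)) * ((a - 1) * x + c)`, and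
the second factor is odd, hence a unit modulo `2 ^ 32`; so `x` is `n`-periodic iff `2 ^ 32`
divides the geometric sum. As `a ≡ 1 [ZMOD 4]`, lifting the exponent gives
`v₂(a ^ n - 1) = v₂(a - 1) + v₂(n)`, i.e. the geometric sum has the same `2`-adic valuation
as `n`, so the periods of every point are exactly the multiples of `2 ^ 32`.
-/

/-- The congruential register update `icng = 69069*icng + 1234567` of Matlab's
`randn`, as a map on `ZMod 2^32`. -/
def R (x : ZMod (2 ^ 32)) : ZMod (2 ^ 32) := 69069 * x + 1234567

open Finset Function

theorem Int.emultiplicity_two_geom_sum {a : ℤ} (ha : 4 ∣ a - 1) (n : ℕ) :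
    emultiplicity 2 (∑ i ∈ Finset.range n, a ^ i) = emultiplicity 2 (n : ℤ) := by
  rcases eq_or_ne a 1 with rfl | ha₁
  · simp
  have hfin : emultiplicity 2 (a - 1) ≠ ⊤ :=
    finiteMultiplicity_iff_emultiplicity_ne_top.1 <|
      Int.finiteMultiplicity_iff.2 ⟨by decide, sub_ne_zero.2 ha₁⟩
  have lte := Int.two_pow_sub_pow' n (y := 1) ha (by omega)
  rwa [one_pow, ← geom_sum_mul, emultiplicity_mul Int.prime_two,
    add_comm (emultiplicity _ (a - 1)), add_left_inj_of_ne_top hfin] at lte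

theorem Int.two_pow_dvd_geom_sum_iff {a : ℤ} (ha : 4 ∣ a - 1) (k n : ℕ) :
    2 ^ k ∣ ∑ i ∈ Finset.range n, a ^ i ↔ 2 ^ k ∣ n := by
  rw [pow_dvd_iff_le_emultiplicity, Int.emultiplicity_two_geom_sum ha,
    ← pow_dvd_iff_le_emultiplicity]
  exact_mod_cast Int.natCast_dvd_natCast

section Affine

variable {α : Type*} [CommRing α]

theorem iterate_affine_sub_self (a c x : α) (n : ℕ) :
    (fun y ↦ a * y + c)^[n] x - x = (∑ i ∈ range n, a ^ i) * ((a - 1) * x + c) := by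
  induction n with
  | zero => simp
  | succ n ih =>
    rw [iterate_succ_apply', geom_sum_succ]
    linear_combination a * ih

theorem isPeriodicPt_affine_iff {a c x : α} (hu : IsUnit ((a - 1) * x + c)) (n : ℕ) :
    IsPeriodicPt (fun y ↦ a * y + c) n x ↔ ∑ i ∈ range n, a ^ i = 0 := by
  rw [IsPeriodicPt, IsFixedPt, ← sub_eq_zero, iterate_affine_sub_self, hu.mul_left_eq_zero]

end Affine

theorem ZMod.isUnit_two_mul_add_one (m : ℕ) (y : ZMod (2 ^ m)) : IsUnit (2 * y + 1) := by
  have h2 : IsNilpotent (2 : ZMod (2 ^ m)) := ⟨m, by exact_mod_cast ZMod.natCast_self (2 ^ m)⟩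
  exact ((Commute.all 2 y).isNilpotent_mul_right h2).isUnit_add_one

theorem ZMod.isPeriodicPt_affine_iff_two_pow_dvd {m : ℕ} {a c : ℤ} (ha : 4 ∣ a - 1)
    (hc : Odd c) (x : ZMod (2 ^ m)) (n : ℕ) :
    IsPeriodicPt (fun y : ZMod (2 ^ m) ↦ a * y + c) n x ↔ 2 ^ m ∣ n := by
  obtain ⟨k, hk⟩ := ha
  obtain ⟨j, rfl⟩ := hc
  have hu : IsUnit (((a : ZMod (2 ^ m)) - 1) * x + ((2 * j + 1 : ℤ) : ZMod (2 ^ m))) := by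
    convert ZMod.isUnit_two_mul_add_one m (2 * k * x + j) using 1
    rw [← Int.cast_one, ← Int.cast_sub, hk]
    push_cast; ring
  rw [isPeriodicPt_affine_iff hu, ← Int.two_pow_dvd_geom_sum_iff ⟨k, hk⟩]
  simpa using ZMod.intCast_zmod_eq_zero_iff_dvd (∑ i ∈ range n, a ^ i) (2 ^ m)

theorem isLeast_periods_of_isPeriodicPt_iff_dvd {α : Type*} {f : α → α} {x : α} {p : ℕ}
    (hp : 0 < p) (h : ∀ n, IsPeriodicPt f n x ↔ p ∣ n) :
    IsLeast {n : ℕ | 0 < n ∧ f^[n] x = x} p :=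
  ⟨⟨hp, (h p).2 dvd_rfl⟩, fun _ ⟨hn, hper⟩ ↦ Nat.le_of_dvd hn ((h _).1 hper)⟩

/-- The multiplicative congruential generator `R` of Matlab's `randn` has
maximal period `2^32`: for every `b`, the least positive integer `n` with
`R^[n] b = b` is `2^32`. -/
theorem randn_cng_maximal_period (b : ZMod (2 ^ 32)) :
    IsLeast {n : ℕ | 0 < n ∧ R^[n] b = b} (2 ^ 32) := by
  have hR : R = fun y ↦ ((69069 : ℤ) : ZMod (2 ^ 32)) * y + ((1234567 : ℤ) : ZMod (2 ^ 32)) :=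
    funext fun y ↦ by simp [R]
  rw [hR]
  exact isLeast_periods_of_isPeriodicPt_iff_dvd (by positivity)
    (ZMod.isPeriodicPt_affine_iff_two_pow_dvd (by norm_num) (by decide) b)
end

section
/- Two icng streams of Matlab's randn whose seeds differ by 64 agree forever in their six least significant bits: for every element b of ZMod 2^32 and every natural number n, the n-fold iterates satisfy R^[n](b + 64) ≡ R^[n](b) (mod 64), i.e. the natural-number representatives of R^[n](b + 64) and R^[n](b) have the same residue modulo 64. -/
lemma iter_shift (b : ZMod (2 ^ 32)) (n : ℕ) :
    R^[n] (b + 64) = R^[n] b + 64 * 69069 ^ n := by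
  induction n with
  | zero => simp
  | succ k ih =>
    rw [Function.iterate_succ_apply', Function.iterate_succ_apply', ih, R, R]
    ring

/-- Two `icng` streams of Matlab's `randn` whose seeds differ by 64 agree
forever in their six least significant bits: the natural-number representatives
of `R^[n] (b + 64)` and `R^[n] b` have the same residue modulo 64. -/
theorem randn_cng_seeds_differ_64_low_bits (b : ZMod (2 ^ 32)) (n : ℕ) :
    (R^[n] (b + 64)).val % 64 = (R^[n] b).val % 64 := by
  have hdvd : (64 : ℕ) ∣ 2 ^ 32 := by norm_num
  have key : ∀ x : ZMod (2 ^ 32), x.val % 64 = (ZMod.castHom hdvd (ZMod 64) x).val := by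
    intro x
    rw [ZMod.castHom_apply, ← ZMod.natCast_val, ZMod.val_natCast]
  rw [key, key, iter_shift, map_add, map_mul]
  have : (ZMod.castHom hdvd (ZMod 64)) 64 = 0 := by
    rw [show (64 : ZMod (2 ^ 32)) = ((64 : ℕ) : ZMod (2 ^ 32)) by norm_num, map_natCast]
    decide
  rw [this, zero_mul, add_zero]
end

section
/- Every non-trivial state of the multiply-with-carry generator with multiplier a = 36969 and base b = 2^16 has period exactly 1211400191: for every state (c, w) with c < 36969 and w < 2^16, other than the fixed points (0, 0) and (36968, 65535), the least positive integer n such that the n-fold iterate F^[n](c, w) equals (c, w) is 1211400191 = (36969·2^16 − 2)/2. -/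
/-- The transition function of the multiply-with-carry generator with
multiplier `a` and base `2^16`. -/
def F (a : ℕ) (s : ℕ × ℕ) : ℕ × ℕ := ((s.1 + a * s.2) / 2 ^ 16, (s.1 + a * s.2) % 2 ^ 16)

lemma sqStep (p g k k2 r s : ℕ) (hk : k2 = 2 * k) (h : g ^ k % p = r) (hs : r * r % p = s) :
    g ^ k2 % p = s := by
  subst hs hk
  rw [mul_comm 2 k, pow_mul, Nat.pow_mod, h, pow_two]

lemma sqMulStep (p g k k2 r s : ℕ) (hk : k2 = 2 * k + 1) (h : g ^ k % p = r)
    (hs : r * r * g % p = s) : g ^ k2 % p = s := by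
  subst hs hk
  rw [pow_succ, Nat.mul_mod, mul_comm 2 k, pow_mul, Nat.pow_mod, h, pow_two]
  exact (Nat.mul_mod _ _ _).symm

lemma zmodPowEq (p g e r : ℕ) (h : g ^ e % p = r % p) : (g : ZMod p) ^ e = (r : ZMod p) := by
  have h2 : ((g ^ e : ℕ) : ZMod p) = ((r : ℕ) : ZMod p) :=
    (ZMod.natCast_eq_natCast_iff _ _ _).mpr h
  push_cast at h2
  exact h2

lemma zmodPowNe (p g e r : ℕ) (h : g ^ e % p = r % p) (hr : ¬ r % p = 1 % p) :
    (g : ZMod p) ^ e ≠ 1 := by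
  rw [zmodPowEq p g e r h]
  intro hone
  exact hr ((ZMod.natCast_eq_natCast_iff _ _ _).mp (by exact_mod_cast hone))

lemma p121019 : Nat.Prime 121019 := by norm_num

lemma pN : Nat.Prime 1211400191 := by
  have ta1 : 7 ^ 1 % 1211400191 = 7 := by norm_num
  have ta2 : 7 ^ 2 % 1211400191 = 49 := sqStep 1211400191 7 1 2 7 49 (by norm_num) ta1 (by norm_num)
  have ta4 : 7 ^ 4 % 1211400191 = 2401 := sqStep 1211400191 7 2 4 49 2401 (by norm_num) ta2 (by norm_num)
  have ta9 : 7 ^ 9 % 1211400191 = 40353607 := sqMulStep 1211400191 7 4 9 2401 40353607 (by norm_num) ta4 (by norm_num)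
  have ta18 : 7 ^ 18 % 1211400191 = 1005160609 := sqStep 1211400191 7 9 18 40353607 1005160609 (by norm_num) ta9 (by norm_num)
  have ta36 : 7 ^ 36 % 1211400191 = 513329927 := sqStep 1211400191 7 18 36 1005160609 513329927 (by norm_num) ta18 (by norm_num)
  have ta72 : 7 ^ 72 % 1211400191 = 634699286 := sqStep 1211400191 7 36 72 513329927 634699286 (by norm_num) ta36 (by norm_num)
  have ta144 : 7 ^ 144 % 1211400191 = 551313329 := sqStep 1211400191 7 72 144 634699286 551313329 (by norm_num) ta72 (by norm_num)
  have ta288 : 7 ^ 288 % 1211400191 = 5003803 := sqStep 1211400191 7 144 288 551313329 5003803 (by norm_num) ta144 (by norm_num)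
  have ta577 : 7 ^ 577 % 1211400191 = 931605783 := sqMulStep 1211400191 7 288 577 5003803 931605783 (by norm_num) ta288 (by norm_num)
  have ta1155 : 7 ^ 1155 % 1211400191 = 161884253 := sqMulStep 1211400191 7 577 1155 931605783 161884253 (by norm_num) ta577 (by norm_num)
  have ta2310 : 7 ^ 2310 % 1211400191 = 301419169 := sqStep 1211400191 7 1155 2310 161884253 301419169 (by norm_num) ta1155 (by norm_num)
  have ta4621 : 7 ^ 4621 % 1211400191 = 958008369 := sqMulStep 1211400191 7 2310 4621 301419169 958008369 (by norm_num) ta2310 (by norm_num)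
  have ta9242 : 7 ^ 9242 % 1211400191 = 1179974489 := sqStep 1211400191 7 4621 9242 958008369 1179974489 (by norm_num) ta4621 (by norm_num)
  have ta18484 : 7 ^ 18484 % 1211400191 = 122883110 := sqStep 1211400191 7 9242 18484 1179974489 122883110 (by norm_num) ta9242 (by norm_num)
  have ta36968 : 7 ^ 36968 % 1211400191 = 283232652 := sqStep 1211400191 7 18484 36968 122883110 283232652 (by norm_num) ta18484 (by norm_num)
  have ta73937 : 7 ^ 73937 % 1211400191 = 45529093 := sqMulStep 1211400191 7 36968 73937 283232652 45529093 (by norm_num) ta36968 (by norm_num)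
  have ta147875 : 7 ^ 147875 % 1211400191 = 1001199151 := sqMulStep 1211400191 7 73937 147875 45529093 1001199151 (by norm_num) ta73937 (by norm_num)
  have ta295751 : 7 ^ 295751 % 1211400191 = 543380461 := sqMulStep 1211400191 7 147875 295751 1001199151 543380461 (by norm_num) ta147875 (by norm_num)
  have ta591503 : 7 ^ 591503 % 1211400191 = 529636645 := sqMulStep 1211400191 7 295751 591503 543380461 529636645 (by norm_num) ta295751 (by norm_num)
  have ta1183007 : 7 ^ 1183007 % 1211400191 = 756998458 := sqMulStep 1211400191 7 591503 1183007 529636645 756998458 (by norm_num) ta591503 (by norm_num)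
  have ta2366015 : 7 ^ 2366015 % 1211400191 = 1136831766 := sqMulStep 1211400191 7 1183007 2366015 756998458 1136831766 (by norm_num) ta1183007 (by norm_num)
  have ta4732031 : 7 ^ 4732031 % 1211400191 = 606498574 := sqMulStep 1211400191 7 2366015 4732031 1136831766 606498574 (by norm_num) ta2366015 (by norm_num)
  have ta9464063 : 7 ^ 9464063 % 1211400191 = 1085651235 := sqMulStep 1211400191 7 4732031 9464063 606498574 1085651235 (by norm_num) ta4732031 (by norm_num)
  have ta18928127 : 7 ^ 18928127 % 1211400191 = 392534600 := sqMulStep 1211400191 7 9464063 18928127 1085651235 392534600 (by norm_num) ta9464063 (by norm_num)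
  have ta37856255 : 7 ^ 37856255 % 1211400191 = 159105970 := sqMulStep 1211400191 7 18928127 37856255 392534600 159105970 (by norm_num) ta18928127 (by norm_num)
  have ta75712511 : 7 ^ 75712511 % 1211400191 = 832709249 := sqMulStep 1211400191 7 37856255 75712511 159105970 832709249 (by norm_num) ta37856255 (by norm_num)
  have ta151425023 : 7 ^ 151425023 % 1211400191 = 210664451 := sqMulStep 1211400191 7 75712511 151425023 832709249 210664451 (by norm_num) ta75712511 (by norm_num)
  have ta302850047 : 7 ^ 302850047 % 1211400191 = 528473978 := sqMulStep 1211400191 7 151425023 302850047 210664451 528473978 (by norm_num) ta151425023 (by norm_num)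
  have ta605700095 : 7 ^ 605700095 % 1211400191 = 1211400190 := sqMulStep 1211400191 7 302850047 605700095 528473978 1211400190 (by norm_num) ta302850047 (by norm_num)
  have ta1211400190 : 7 ^ 1211400190 % 1211400191 = 1 := sqStep 1211400191 7 605700095 1211400190 1211400190 1 (by norm_num) ta605700095 (by norm_num)
  have u2a1 : 7 ^ 1 % 1211400191 = 7 := by norm_num
  have u2a2 : 7 ^ 2 % 1211400191 = 49 := sqStep 1211400191 7 1 2 7 49 (by norm_num) u2a1 (by norm_num)
  have u2a4 : 7 ^ 4 % 1211400191 = 2401 := sqStep 1211400191 7 2 4 49 2401 (by norm_num) u2a2 (by norm_num)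
  have u2a9 : 7 ^ 9 % 1211400191 = 40353607 := sqMulStep 1211400191 7 4 9 2401 40353607 (by norm_num) u2a4 (by norm_num)
  have u2a18 : 7 ^ 18 % 1211400191 = 1005160609 := sqStep 1211400191 7 9 18 40353607 1005160609 (by norm_num) u2a9 (by norm_num)
  have u2a36 : 7 ^ 36 % 1211400191 = 513329927 := sqStep 1211400191 7 18 36 1005160609 513329927 (by norm_num) u2a18 (by norm_num)
  have u2a72 : 7 ^ 72 % 1211400191 = 634699286 := sqStep 1211400191 7 36 72 513329927 634699286 (by norm_num) u2a36 (by norm_num)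
  have u2a144 : 7 ^ 144 % 1211400191 = 551313329 := sqStep 1211400191 7 72 144 634699286 551313329 (by norm_num) u2a72 (by norm_num)
  have u2a288 : 7 ^ 288 % 1211400191 = 5003803 := sqStep 1211400191 7 144 288 551313329 5003803 (by norm_num) u2a144 (by norm_num)
  have u2a577 : 7 ^ 577 % 1211400191 = 931605783 := sqMulStep 1211400191 7 288 577 5003803 931605783 (by norm_num) u2a288 (by norm_num)
  have u2a1155 : 7 ^ 1155 % 1211400191 = 161884253 := sqMulStep 1211400191 7 577 1155 931605783 161884253 (by norm_num) u2a577 (by norm_num)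
  have u2a2310 : 7 ^ 2310 % 1211400191 = 301419169 := sqStep 1211400191 7 1155 2310 161884253 301419169 (by norm_num) u2a1155 (by norm_num)
  have u2a4621 : 7 ^ 4621 % 1211400191 = 958008369 := sqMulStep 1211400191 7 2310 4621 301419169 958008369 (by norm_num) u2a2310 (by norm_num)
  have u2a9242 : 7 ^ 9242 % 1211400191 = 1179974489 := sqStep 1211400191 7 4621 9242 958008369 1179974489 (by norm_num) u2a4621 (by norm_num)
  have u2a18484 : 7 ^ 18484 % 1211400191 = 122883110 := sqStep 1211400191 7 9242 18484 1179974489 122883110 (by norm_num) u2a9242 (by norm_num)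
  have u2a36968 : 7 ^ 36968 % 1211400191 = 283232652 := sqStep 1211400191 7 18484 36968 122883110 283232652 (by norm_num) u2a18484 (by norm_num)
  have u2a73937 : 7 ^ 73937 % 1211400191 = 45529093 := sqMulStep 1211400191 7 36968 73937 283232652 45529093 (by norm_num) u2a36968 (by norm_num)
  have u2a147875 : 7 ^ 147875 % 1211400191 = 1001199151 := sqMulStep 1211400191 7 73937 147875 45529093 1001199151 (by norm_num) u2a73937 (by norm_num)
  have u2a295751 : 7 ^ 295751 % 1211400191 = 543380461 := sqMulStep 1211400191 7 147875 295751 1001199151 543380461 (by norm_num) u2a147875 (by norm_num)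
  have u2a591503 : 7 ^ 591503 % 1211400191 = 529636645 := sqMulStep 1211400191 7 295751 591503 543380461 529636645 (by norm_num) u2a295751 (by norm_num)
  have u2a1183007 : 7 ^ 1183007 % 1211400191 = 756998458 := sqMulStep 1211400191 7 591503 1183007 529636645 756998458 (by norm_num) u2a591503 (by norm_num)
  have u2a2366015 : 7 ^ 2366015 % 1211400191 = 1136831766 := sqMulStep 1211400191 7 1183007 2366015 756998458 1136831766 (by norm_num) u2a1183007 (by norm_num)
  have u2a4732031 : 7 ^ 4732031 % 1211400191 = 606498574 := sqMulStep 1211400191 7 2366015 4732031 1136831766 606498574 (by norm_num) u2a2366015 (by norm_num)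
  have u2a9464063 : 7 ^ 9464063 % 1211400191 = 1085651235 := sqMulStep 1211400191 7 4732031 9464063 606498574 1085651235 (by norm_num) u2a4732031 (by norm_num)
  have u2a18928127 : 7 ^ 18928127 % 1211400191 = 392534600 := sqMulStep 1211400191 7 9464063 18928127 1085651235 392534600 (by norm_num) u2a9464063 (by norm_num)
  have u2a37856255 : 7 ^ 37856255 % 1211400191 = 159105970 := sqMulStep 1211400191 7 18928127 37856255 392534600 159105970 (by norm_num) u2a18928127 (by norm_num)
  have u2a75712511 : 7 ^ 75712511 % 1211400191 = 832709249 := sqMulStep 1211400191 7 37856255 75712511 159105970 832709249 (by norm_num) u2a37856255 (by norm_num)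
  have u2a151425023 : 7 ^ 151425023 % 1211400191 = 210664451 := sqMulStep 1211400191 7 75712511 151425023 832709249 210664451 (by norm_num) u2a75712511 (by norm_num)
  have u2a302850047 : 7 ^ 302850047 % 1211400191 = 528473978 := sqMulStep 1211400191 7 151425023 302850047 210664451 528473978 (by norm_num) u2a151425023 (by norm_num)
  have u2a605700095 : 7 ^ 605700095 % 1211400191 = 1211400190 := sqMulStep 1211400191 7 302850047 605700095 528473978 1211400190 (by norm_num) u2a302850047 (by norm_num)
  have goal2 : (7 : ZMod 1211400191) ^ ((1211400191 - 1) / 2) ≠ 1 := by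
    have he : (1211400191 - 1) / 2 = 605700095 := by norm_num
    rw [he]
    exact zmodPowNe 1211400191 7 605700095 1211400190 (by rw [u2a605700095]) (by norm_num)
  have u5a1 : 7 ^ 1 % 1211400191 = 7 := by norm_num
  have u5a3 : 7 ^ 3 % 1211400191 = 343 := sqMulStep 1211400191 7 1 3 7 343 (by norm_num) u5a1 (by norm_num)
  have u5a7 : 7 ^ 7 % 1211400191 = 823543 := sqMulStep 1211400191 7 3 7 343 823543 (by norm_num) u5a3 (by norm_num)
  have u5a14 : 7 ^ 14 % 1211400191 = 1050366080 := sqStep 1211400191 7 7 14 823543 1050366080 (by norm_num) u5a7 (by norm_num)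
  have u5a28 : 7 ^ 28 % 1211400191 = 137495710 := sqStep 1211400191 7 14 28 1050366080 137495710 (by norm_num) u5a14 (by norm_num)
  have u5a57 : 7 ^ 57 % 1211400191 = 526852158 := sqMulStep 1211400191 7 28 57 137495710 526852158 (by norm_num) u5a28 (by norm_num)
  have u5a115 : 7 ^ 115 % 1211400191 = 352392448 := sqMulStep 1211400191 7 57 115 526852158 352392448 (by norm_num) u5a57 (by norm_num)
  have u5a231 : 7 ^ 231 % 1211400191 = 523975522 := sqMulStep 1211400191 7 115 231 352392448 523975522 (by norm_num) u5a115 (by norm_num)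
  have u5a462 : 7 ^ 462 % 1211400191 = 265751943 := sqStep 1211400191 7 231 462 523975522 265751943 (by norm_num) u5a231 (by norm_num)
  have u5a924 : 7 ^ 924 % 1211400191 = 723259862 := sqStep 1211400191 7 462 924 265751943 723259862 (by norm_num) u5a462 (by norm_num)
  have u5a1848 : 7 ^ 1848 % 1211400191 = 1158554958 := sqStep 1211400191 7 924 1848 723259862 1158554958 (by norm_num) u5a924 (by norm_num)
  have u5a3696 : 7 ^ 3696 % 1211400191 = 807115618 := sqStep 1211400191 7 1848 3696 1158554958 807115618 (by norm_num) u5a1848 (by norm_num)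
  have u5a7393 : 7 ^ 7393 % 1211400191 = 720999635 := sqMulStep 1211400191 7 3696 7393 807115618 720999635 (by norm_num) u5a3696 (by norm_num)
  have u5a14787 : 7 ^ 14787 % 1211400191 = 145810233 := sqMulStep 1211400191 7 7393 14787 720999635 145810233 (by norm_num) u5a7393 (by norm_num)
  have u5a29575 : 7 ^ 29575 % 1211400191 = 192842261 := sqMulStep 1211400191 7 14787 29575 145810233 192842261 (by norm_num) u5a14787 (by norm_num)
  have u5a59150 : 7 ^ 59150 % 1211400191 = 360583587 := sqStep 1211400191 7 29575 59150 192842261 360583587 (by norm_num) u5a29575 (by norm_num)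
  have u5a118300 : 7 ^ 118300 % 1211400191 = 667208353 := sqStep 1211400191 7 59150 118300 360583587 667208353 (by norm_num) u5a59150 (by norm_num)
  have u5a236601 : 7 ^ 236601 % 1211400191 = 568233763 := sqMulStep 1211400191 7 118300 236601 667208353 568233763 (by norm_num) u5a118300 (by norm_num)
  have u5a473203 : 7 ^ 473203 % 1211400191 = 946087524 := sqMulStep 1211400191 7 236601 473203 568233763 946087524 (by norm_num) u5a236601 (by norm_num)
  have u5a946406 : 7 ^ 946406 % 1211400191 = 966019136 := sqStep 1211400191 7 473203 946406 946087524 966019136 (by norm_num) u5a473203 (by norm_num)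
  have u5a1892812 : 7 ^ 1892812 % 1211400191 = 646581793 := sqStep 1211400191 7 946406 1892812 966019136 646581793 (by norm_num) u5a946406 (by norm_num)
  have u5a3785625 : 7 ^ 3785625 % 1211400191 = 196723098 := sqMulStep 1211400191 7 1892812 3785625 646581793 196723098 (by norm_num) u5a1892812 (by norm_num)
  have u5a7571251 : 7 ^ 7571251 % 1211400191 = 848573738 := sqMulStep 1211400191 7 3785625 7571251 196723098 848573738 (by norm_num) u5a3785625 (by norm_num)
  have u5a15142502 : 7 ^ 15142502 % 1211400191 = 587563514 := sqStep 1211400191 7 7571251 15142502 848573738 587563514 (by norm_num) u5a7571251 (by norm_num)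
  have u5a30285004 : 7 ^ 30285004 % 1211400191 = 763293387 := sqStep 1211400191 7 15142502 30285004 587563514 763293387 (by norm_num) u5a15142502 (by norm_num)
  have u5a60570009 : 7 ^ 60570009 % 1211400191 = 270534929 := sqMulStep 1211400191 7 30285004 60570009 763293387 270534929 (by norm_num) u5a30285004 (by norm_num)
  have u5a121140019 : 7 ^ 121140019 % 1211400191 = 848535769 := sqMulStep 1211400191 7 60570009 121140019 270534929 848535769 (by norm_num) u5a60570009 (by norm_num)
  have u5a242280038 : 7 ^ 242280038 % 1211400191 = 1047052094 := sqStep 1211400191 7 121140019 242280038 848535769 1047052094 (by norm_num) u5a121140019 (by norm_num)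
  have goal5 : (7 : ZMod 1211400191) ^ ((1211400191 - 1) / 5) ≠ 1 := by
    have he : (1211400191 - 1) / 5 = 242280038 := by norm_num
    rw [he]
    exact zmodPowNe 1211400191 7 242280038 1047052094 (by rw [u5a242280038]) (by norm_num)
  have u7a1 : 7 ^ 1 % 1211400191 = 7 := by norm_num
  have u7a2 : 7 ^ 2 % 1211400191 = 49 := sqStep 1211400191 7 1 2 7 49 (by norm_num) u7a1 (by norm_num)
  have u7a5 : 7 ^ 5 % 1211400191 = 16807 := sqMulStep 1211400191 7 2 5 49 16807 (by norm_num) u7a2 (by norm_num)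
  have u7a10 : 7 ^ 10 % 1211400191 = 282475249 := sqStep 1211400191 7 5 10 16807 282475249 (by norm_num) u7a5 (by norm_num)
  have u7a20 : 7 ^ 20 % 1211400191 = 796862201 := sqStep 1211400191 7 10 20 282475249 796862201 (by norm_num) u7a10 (by norm_num)
  have u7a41 : 7 ^ 41 % 1211400191 = 1155322978 := sqMulStep 1211400191 7 20 41 796862201 1155322978 (by norm_num) u7a20 (by norm_num)
  have u7a82 : 7 ^ 82 % 1211400191 = 655833716 := sqStep 1211400191 7 41 82 1155322978 655833716 (by norm_num) u7a41 (by norm_num)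
  have u7a165 : 7 ^ 165 % 1211400191 = 1014445357 := sqMulStep 1211400191 7 82 165 655833716 1014445357 (by norm_num) u7a82 (by norm_num)
  have u7a330 : 7 ^ 330 % 1211400191 = 479605093 := sqStep 1211400191 7 165 330 1014445357 479605093 (by norm_num) u7a165 (by norm_num)
  have u7a660 : 7 ^ 660 % 1211400191 = 218999248 := sqStep 1211400191 7 330 660 479605093 218999248 (by norm_num) u7a330 (by norm_num)
  have u7a1320 : 7 ^ 1320 % 1211400191 = 888464831 := sqStep 1211400191 7 660 1320 218999248 888464831 (by norm_num) u7a660 (by norm_num)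
  have u7a2640 : 7 ^ 2640 % 1211400191 = 563685883 := sqStep 1211400191 7 1320 2640 888464831 563685883 (by norm_num) u7a1320 (by norm_num)
  have u7a5281 : 7 ^ 5281 % 1211400191 = 1006104204 := sqMulStep 1211400191 7 2640 5281 563685883 1006104204 (by norm_num) u7a2640 (by norm_num)
  have u7a10562 : 7 ^ 10562 % 1211400191 = 419125759 := sqStep 1211400191 7 5281 10562 1006104204 419125759 (by norm_num) u7a5281 (by norm_num)
  have u7a21125 : 7 ^ 21125 % 1211400191 = 918121896 := sqMulStep 1211400191 7 10562 21125 419125759 918121896 (by norm_num) u7a10562 (by norm_num)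
  have u7a42250 : 7 ^ 42250 % 1211400191 = 935674410 := sqStep 1211400191 7 21125 42250 918121896 935674410 (by norm_num) u7a21125 (by norm_num)
  have u7a84500 : 7 ^ 84500 % 1211400191 = 793136778 := sqStep 1211400191 7 42250 84500 935674410 793136778 (by norm_num) u7a42250 (by norm_num)
  have u7a169001 : 7 ^ 169001 % 1211400191 = 302688832 := sqMulStep 1211400191 7 84500 169001 793136778 302688832 (by norm_num) u7a84500 (by norm_num)
  have u7a338002 : 7 ^ 338002 % 1211400191 = 626826549 := sqStep 1211400191 7 169001 338002 302688832 626826549 (by norm_num) u7a169001 (by norm_num)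
  have u7a676004 : 7 ^ 676004 % 1211400191 = 265365861 := sqStep 1211400191 7 338002 676004 626826549 265365861 (by norm_num) u7a338002 (by norm_num)
  have u7a1352009 : 7 ^ 1352009 % 1211400191 = 712706292 := sqMulStep 1211400191 7 676004 1352009 265365861 712706292 (by norm_num) u7a676004 (by norm_num)
  have u7a2704018 : 7 ^ 2704018 % 1211400191 = 979487729 := sqStep 1211400191 7 1352009 2704018 712706292 979487729 (by norm_num) u7a1352009 (by norm_num)
  have u7a5408036 : 7 ^ 5408036 % 1211400191 = 502539598 := sqStep 1211400191 7 2704018 5408036 979487729 502539598 (by norm_num) u7a2704018 (by norm_num)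
  have u7a10816073 : 7 ^ 10816073 % 1211400191 = 1189606638 := sqMulStep 1211400191 7 5408036 10816073 502539598 1189606638 (by norm_num) u7a5408036 (by norm_num)
  have u7a21632146 : 7 ^ 21632146 % 1211400191 = 433877675 := sqStep 1211400191 7 10816073 21632146 1189606638 433877675 (by norm_num) u7a10816073 (by norm_num)
  have u7a43264292 : 7 ^ 43264292 % 1211400191 = 78082002 := sqStep 1211400191 7 21632146 43264292 433877675 78082002 (by norm_num) u7a21632146 (by norm_num)
  have u7a86528585 : 7 ^ 86528585 % 1211400191 = 867371758 := sqMulStep 1211400191 7 43264292 86528585 78082002 867371758 (by norm_num) u7a43264292 (by norm_num)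
  have u7a173057170 : 7 ^ 173057170 % 1211400191 = 253057393 := sqStep 1211400191 7 86528585 173057170 867371758 253057393 (by norm_num) u7a86528585 (by norm_num)
  have goal7 : (7 : ZMod 1211400191) ^ ((1211400191 - 1) / 7) ≠ 1 := by
    have he : (1211400191 - 1) / 7 = 173057170 := by norm_num
    rw [he]
    exact zmodPowNe 1211400191 7 173057170 253057393 (by rw [u7a173057170]) (by norm_num)
  have u11a1 : 7 ^ 1 % 1211400191 = 7 := by norm_num
  have u11a3 : 7 ^ 3 % 1211400191 = 343 := sqMulStep 1211400191 7 1 3 7 343 (by norm_num) u11a1 (by norm_num)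
  have u11a6 : 7 ^ 6 % 1211400191 = 117649 := sqStep 1211400191 7 3 6 343 117649 (by norm_num) u11a3 (by norm_num)
  have u11a13 : 7 ^ 13 % 1211400191 = 1188395318 := sqMulStep 1211400191 7 6 13 117649 1188395318 (by norm_num) u11a6 (by norm_num)
  have u11a26 : 7 ^ 26 % 1211400191 = 991704150 := sqStep 1211400191 7 13 26 1188395318 991704150 (by norm_num) u11a13 (by norm_num)
  have u11a52 : 7 ^ 52 % 1211400191 = 816376832 := sqStep 1211400191 7 26 52 991704150 816376832 (by norm_num) u11a26 (by norm_num)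
  have u11a105 : 7 ^ 105 % 1211400191 = 744624148 := sqMulStep 1211400191 7 52 105 816376832 744624148 (by norm_num) u11a52 (by norm_num)
  have u11a210 : 7 ^ 210 % 1211400191 = 499682196 := sqStep 1211400191 7 105 210 744624148 499682196 (by norm_num) u11a105 (by norm_num)
  have u11a420 : 7 ^ 420 % 1211400191 = 355077298 := sqStep 1211400191 7 210 420 499682196 355077298 (by norm_num) u11a210 (by norm_num)
  have u11a840 : 7 ^ 840 % 1211400191 = 162317757 := sqStep 1211400191 7 420 840 355077298 162317757 (by norm_num) u11a420 (by norm_num)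
  have u11a1680 : 7 ^ 1680 % 1211400191 = 153602962 := sqStep 1211400191 7 840 1680 162317757 153602962 (by norm_num) u11a840 (by norm_num)
  have u11a3360 : 7 ^ 3360 % 1211400191 = 195956596 := sqStep 1211400191 7 1680 3360 153602962 195956596 (by norm_num) u11a1680 (by norm_num)
  have u11a6721 : 7 ^ 6721 % 1211400191 = 235097772 := sqMulStep 1211400191 7 3360 6721 195956596 235097772 (by norm_num) u11a3360 (by norm_num)
  have u11a13443 : 7 ^ 13443 % 1211400191 = 610808380 := sqMulStep 1211400191 7 6721 13443 235097772 610808380 (by norm_num) u11a6721 (by norm_num)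
  have u11a26886 : 7 ^ 26886 % 1211400191 = 101868657 := sqStep 1211400191 7 13443 26886 610808380 101868657 (by norm_num) u11a13443 (by norm_num)
  have u11a53773 : 7 ^ 53773 % 1211400191 = 783536140 := sqMulStep 1211400191 7 26886 53773 101868657 783536140 (by norm_num) u11a26886 (by norm_num)
  have u11a107546 : 7 ^ 107546 % 1211400191 = 82676710 := sqStep 1211400191 7 53773 107546 783536140 82676710 (by norm_num) u11a53773 (by norm_num)
  have u11a215092 : 7 ^ 215092 % 1211400191 = 138488837 := sqStep 1211400191 7 107546 215092 82676710 138488837 (by norm_num) u11a107546 (by norm_num)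
  have u11a430184 : 7 ^ 430184 % 1211400191 = 7457976 := sqStep 1211400191 7 215092 430184 138488837 7457976 (by norm_num) u11a215092 (by norm_num)
  have u11a860369 : 7 ^ 860369 % 1211400191 = 975127868 := sqMulStep 1211400191 7 430184 860369 7457976 975127868 (by norm_num) u11a430184 (by norm_num)
  have u11a1720738 : 7 ^ 1720738 % 1211400191 = 863017764 := sqStep 1211400191 7 860369 1720738 975127868 863017764 (by norm_num) u11a860369 (by norm_num)
  have u11a3441477 : 7 ^ 3441477 % 1211400191 = 1169898671 := sqMulStep 1211400191 7 1720738 3441477 863017764 1169898671 (by norm_num) u11a1720738 (by norm_num)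
  have u11a6882955 : 7 ^ 6882955 % 1211400191 = 716418178 := sqMulStep 1211400191 7 3441477 6882955 1169898671 716418178 (by norm_num) u11a3441477 (by norm_num)
  have u11a13765911 : 7 ^ 13765911 % 1211400191 = 33214629 := sqMulStep 1211400191 7 6882955 13765911 716418178 33214629 (by norm_num) u11a6882955 (by norm_num)
  have u11a27531822 : 7 ^ 27531822 % 1211400191 = 328265660 := sqStep 1211400191 7 13765911 27531822 33214629 328265660 (by norm_num) u11a13765911 (by norm_num)
  have u11a55063645 : 7 ^ 55063645 % 1211400191 = 387957243 := sqMulStep 1211400191 7 27531822 55063645 328265660 387957243 (by norm_num) u11a27531822 (by norm_num)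
  have u11a110127290 : 7 ^ 110127290 % 1211400191 = 1057702255 := sqStep 1211400191 7 55063645 110127290 387957243 1057702255 (by norm_num) u11a55063645 (by norm_num)
  have goal11 : (7 : ZMod 1211400191) ^ ((1211400191 - 1) / 11) ≠ 1 := by
    have he : (1211400191 - 1) / 11 = 110127290 := by norm_num
    rw [he]
    exact zmodPowNe 1211400191 7 110127290 1057702255 (by rw [u11a110127290]) (by norm_num)
  have u13a1 : 7 ^ 1 % 1211400191 = 7 := by norm_num
  have u13a2 : 7 ^ 2 % 1211400191 = 49 := sqStep 1211400191 7 1 2 7 49 (by norm_num) u13a1 (by norm_num)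
  have u13a5 : 7 ^ 5 % 1211400191 = 16807 := sqMulStep 1211400191 7 2 5 49 16807 (by norm_num) u13a2 (by norm_num)
  have u13a11 : 7 ^ 11 % 1211400191 = 765926552 := sqMulStep 1211400191 7 5 11 16807 765926552 (by norm_num) u13a5 (by norm_num)
  have u13a22 : 7 ^ 22 % 1211400191 = 281441737 := sqStep 1211400191 7 11 22 765926552 281441737 (by norm_num) u13a11 (by norm_num)
  have u13a44 : 7 ^ 44 % 1211400191 = 147918997 := sqStep 1211400191 7 22 44 281441737 147918997 (by norm_num) u13a22 (by norm_num)
  have u13a88 : 7 ^ 88 % 1211400191 = 468488321 := sqStep 1211400191 7 44 88 147918997 468488321 (by norm_num) u13a44 (by norm_num)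
  have u13a177 : 7 ^ 177 % 1211400191 = 800931736 := sqMulStep 1211400191 7 88 177 468488321 800931736 (by norm_num) u13a88 (by norm_num)
  have u13a355 : 7 ^ 355 % 1211400191 = 533543515 := sqMulStep 1211400191 7 177 355 800931736 533543515 (by norm_num) u13a177 (by norm_num)
  have u13a710 : 7 ^ 710 % 1211400191 = 1042189230 := sqStep 1211400191 7 355 710 533543515 1042189230 (by norm_num) u13a355 (by norm_num)
  have u13a1421 : 7 ^ 1421 % 1211400191 = 189209953 := sqMulStep 1211400191 7 710 1421 1042189230 189209953 (by norm_num) u13a710 (by norm_num)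
  have u13a2843 : 7 ^ 2843 % 1211400191 = 916188872 := sqMulStep 1211400191 7 1421 2843 189209953 916188872 (by norm_num) u13a1421 (by norm_num)
  have u13a5687 : 7 ^ 5687 % 1211400191 = 937500172 := sqMulStep 1211400191 7 2843 5687 916188872 937500172 (by norm_num) u13a2843 (by norm_num)
  have u13a11375 : 7 ^ 11375 % 1211400191 = 326868262 := sqMulStep 1211400191 7 5687 11375 937500172 326868262 (by norm_num) u13a5687 (by norm_num)
  have u13a22750 : 7 ^ 22750 % 1211400191 = 1074916451 := sqStep 1211400191 7 11375 22750 326868262 1074916451 (by norm_num) u13a11375 (by norm_num)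
  have u13a45500 : 7 ^ 45500 % 1211400191 = 309963219 := sqStep 1211400191 7 22750 45500 1074916451 309963219 (by norm_num) u13a22750 (by norm_num)
  have u13a91000 : 7 ^ 91000 % 1211400191 = 123466746 := sqStep 1211400191 7 45500 91000 309963219 123466746 (by norm_num) u13a45500 (by norm_num)
  have u13a182001 : 7 ^ 182001 % 1211400191 = 622037429 := sqMulStep 1211400191 7 91000 182001 123466746 622037429 (by norm_num) u13a91000 (by norm_num)
  have u13a364002 : 7 ^ 364002 % 1211400191 = 964657240 := sqStep 1211400191 7 182001 364002 622037429 964657240 (by norm_num) u13a182001 (by norm_num)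
  have u13a728004 : 7 ^ 728004 % 1211400191 = 669384127 := sqStep 1211400191 7 364002 728004 964657240 669384127 (by norm_num) u13a364002 (by norm_num)
  have u13a1456009 : 7 ^ 1456009 % 1211400191 = 884848666 := sqMulStep 1211400191 7 728004 1456009 669384127 884848666 (by norm_num) u13a728004 (by norm_num)
  have u13a2912019 : 7 ^ 2912019 % 1211400191 = 1199509407 := sqMulStep 1211400191 7 1456009 2912019 884848666 1199509407 (by norm_num) u13a1456009 (by norm_num)
  have u13a5824039 : 7 ^ 5824039 % 1211400191 = 659092345 := sqMulStep 1211400191 7 2912019 5824039 1199509407 659092345 (by norm_num) u13a2912019 (by norm_num)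
  have u13a11648078 : 7 ^ 11648078 % 1211400191 = 264448784 := sqStep 1211400191 7 5824039 11648078 659092345 264448784 (by norm_num) u13a5824039 (by norm_num)
  have u13a23296157 : 7 ^ 23296157 % 1211400191 = 877415349 := sqMulStep 1211400191 7 11648078 23296157 264448784 877415349 (by norm_num) u13a11648078 (by norm_num)
  have u13a46592315 : 7 ^ 46592315 % 1211400191 = 536034690 := sqMulStep 1211400191 7 23296157 46592315 877415349 536034690 (by norm_num) u13a23296157 (by norm_num)
  have u13a93184630 : 7 ^ 93184630 % 1211400191 = 99120448 := sqStep 1211400191 7 46592315 93184630 536034690 99120448 (by norm_num) u13a46592315 (by norm_num)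
  have goal13 : (7 : ZMod 1211400191) ^ ((1211400191 - 1) / 13) ≠ 1 := by
    have he : (1211400191 - 1) / 13 = 93184630 := by norm_num
    rw [he]
    exact zmodPowNe 1211400191 7 93184630 99120448 (by rw [u13a93184630]) (by norm_num)
  have u121019a1 : 7 ^ 1 % 1211400191 = 7 := by norm_num
  have u121019a2 : 7 ^ 2 % 1211400191 = 49 := sqStep 1211400191 7 1 2 7 49 (by norm_num) u121019a1 (by norm_num)
  have u121019a4 : 7 ^ 4 % 1211400191 = 2401 := sqStep 1211400191 7 2 4 49 2401 (by norm_num) u121019a2 (by norm_num)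
  have u121019a9 : 7 ^ 9 % 1211400191 = 40353607 := sqMulStep 1211400191 7 4 9 2401 40353607 (by norm_num) u121019a4 (by norm_num)
  have u121019a19 : 7 ^ 19 % 1211400191 = 979123308 := sqMulStep 1211400191 7 9 19 40353607 979123308 (by norm_num) u121019a9 (by norm_num)
  have u121019a39 : 7 ^ 39 % 1211400191 = 419137266 := sqMulStep 1211400191 7 19 39 979123308 419137266 (by norm_num) u121019a19 (by norm_num)
  have u121019a78 : 7 ^ 78 % 1211400191 = 1028525374 := sqStep 1211400191 7 39 78 419137266 1028525374 (by norm_num) u121019a39 (by norm_num)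
  have u121019a156 : 7 ^ 156 % 1211400191 = 935835029 := sqStep 1211400191 7 78 156 1028525374 935835029 (by norm_num) u121019a78 (by norm_num)
  have u121019a312 : 7 ^ 312 % 1211400191 = 290124206 := sqStep 1211400191 7 156 312 935835029 290124206 (by norm_num) u121019a156 (by norm_num)
  have u121019a625 : 7 ^ 625 % 1211400191 = 357571894 := sqMulStep 1211400191 7 312 625 290124206 357571894 (by norm_num) u121019a312 (by norm_num)
  have u121019a1251 : 7 ^ 1251 % 1211400191 = 1070295410 := sqMulStep 1211400191 7 625 1251 357571894 1070295410 (by norm_num) u121019a625 (by norm_num)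
  have u121019a2502 : 7 ^ 2502 % 1211400191 = 218584253 := sqStep 1211400191 7 1251 2502 1070295410 218584253 (by norm_num) u121019a1251 (by norm_num)
  have u121019a5005 : 7 ^ 5005 % 1211400191 = 26693382 := sqMulStep 1211400191 7 2502 5005 218584253 26693382 (by norm_num) u121019a2502 (by norm_num)
  have u121019a10010 : 7 ^ 10010 % 1211400191 = 741453252 := sqStep 1211400191 7 5005 10010 26693382 741453252 (by norm_num) u121019a5005 (by norm_num)
  have goal121019 : (7 : ZMod 1211400191) ^ ((1211400191 - 1) / 121019) ≠ 1 := by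
    have he : (1211400191 - 1) / 121019 = 10010 := by norm_num
    rw [he]
    exact zmodPowNe 1211400191 7 10010 741453252 (by rw [u121019a10010]) (by norm_num)
  apply lucas_primality 1211400191 (7 : ZMod 1211400191)
  · have he : 1211400191 - 1 = 1211400190 := by norm_num
    rw [he]
    exact zmodPowEq 1211400191 7 1211400190 1 (by rw [ta1211400190])
  · intro q hq hd
    have hd' : q ∣ 2 * (5 * (7 * (11 * (13 * 121019)))) := by
      have he : 1211400191 - 1 = 2 * (5 * (7 * (11 * (13 * 121019)))) := by norm_num
      rwa [he] at hd
    rcases (Nat.Prime.dvd_mul hq).mp hd' with h | hd'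
    · rw [(Nat.prime_dvd_prime_iff_eq hq (by norm_num)).mp h]; exact goal2
    rcases (Nat.Prime.dvd_mul hq).mp hd' with h | hd'
    · rw [(Nat.prime_dvd_prime_iff_eq hq (by norm_num)).mp h]; exact goal5
    rcases (Nat.Prime.dvd_mul hq).mp hd' with h | hd'
    · rw [(Nat.prime_dvd_prime_iff_eq hq (by norm_num)).mp h]; exact goal7
    rcases (Nat.Prime.dvd_mul hq).mp hd' with h | hd'
    · rw [(Nat.prime_dvd_prime_iff_eq hq (by norm_num)).mp h]; exact goal11
    rcases (Nat.Prime.dvd_mul hq).mp hd' with h | h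
    · rw [(Nat.prime_dvd_prime_iff_eq hq (by norm_num)).mp h]; exact goal13
    · rw [(Nat.prime_dvd_prime_iff_eq hq p121019).mp h]; exact goal121019

lemma pM : Nat.Prime 2422800383 := by
  have va1 : 5 ^ 1 % 2422800383 = 5 := by norm_num
  have va2 : 5 ^ 2 % 2422800383 = 25 := sqStep 2422800383 5 1 2 5 25 (by norm_num) va1 (by norm_num)
  have va4 : 5 ^ 4 % 2422800383 = 625 := sqStep 2422800383 5 2 4 25 625 (by norm_num) va2 (by norm_num)
  have va9 : 5 ^ 9 % 2422800383 = 1953125 := sqMulStep 2422800383 5 4 9 625 1953125 (by norm_num) va4 (by norm_num)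
  have va18 : 5 ^ 18 % 2422800383 = 1209462783 := sqStep 2422800383 5 9 18 1953125 1209462783 (by norm_num) va9 (by norm_num)
  have va36 : 5 ^ 36 % 2422800383 = 1239602701 := sqStep 2422800383 5 18 36 1209462783 1239602701 (by norm_num) va18 (by norm_num)
  have va72 : 5 ^ 72 % 2422800383 = 1010062616 := sqStep 2422800383 5 36 72 1239602701 1010062616 (by norm_num) va36 (by norm_num)
  have va144 : 5 ^ 144 % 2422800383 = 1813795926 := sqStep 2422800383 5 72 144 1010062616 1813795926 (by norm_num) va72 (by norm_num)
  have va288 : 5 ^ 288 % 2422800383 = 604769536 := sqStep 2422800383 5 144 288 1813795926 604769536 (by norm_num) va144 (by norm_num)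
  have va577 : 5 ^ 577 % 2422800383 = 920082299 := sqMulStep 2422800383 5 288 577 604769536 920082299 (by norm_num) va288 (by norm_num)
  have va1155 : 5 ^ 1155 % 2422800383 = 822480291 := sqMulStep 2422800383 5 577 1155 920082299 822480291 (by norm_num) va577 (by norm_num)
  have va2310 : 5 ^ 2310 % 2422800383 = 610624478 := sqStep 2422800383 5 1155 2310 822480291 610624478 (by norm_num) va1155 (by norm_num)
  have va4621 : 5 ^ 4621 % 2422800383 = 1837478843 := sqMulStep 2422800383 5 2310 4621 610624478 1837478843 (by norm_num) va2310 (by norm_num)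
  have va9242 : 5 ^ 9242 % 2422800383 = 740632001 := sqStep 2422800383 5 4621 9242 1837478843 740632001 (by norm_num) va4621 (by norm_num)
  have va18484 : 5 ^ 18484 % 2422800383 = 2379090093 := sqStep 2422800383 5 9242 18484 740632001 2379090093 (by norm_num) va9242 (by norm_num)
  have va36968 : 5 ^ 36968 % 2422800383 = 566255279 := sqStep 2422800383 5 18484 36968 2379090093 566255279 (by norm_num) va18484 (by norm_num)
  have va73937 : 5 ^ 73937 % 2422800383 = 726140311 := sqMulStep 2422800383 5 36968 73937 566255279 726140311 (by norm_num) va36968 (by norm_num)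
  have va147875 : 5 ^ 147875 % 2422800383 = 751125312 := sqMulStep 2422800383 5 73937 147875 726140311 751125312 (by norm_num) va73937 (by norm_num)
  have va295751 : 5 ^ 295751 % 2422800383 = 2226790233 := sqMulStep 2422800383 5 147875 295751 751125312 2226790233 (by norm_num) va147875 (by norm_num)
  have va591503 : 5 ^ 591503 % 2422800383 = 1311666790 := sqMulStep 2422800383 5 295751 591503 2226790233 1311666790 (by norm_num) va295751 (by norm_num)
  have va1183007 : 5 ^ 1183007 % 2422800383 = 445223927 := sqMulStep 2422800383 5 591503 1183007 1311666790 445223927 (by norm_num) va591503 (by norm_num)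
  have va2366015 : 5 ^ 2366015 % 2422800383 = 1248464495 := sqMulStep 2422800383 5 1183007 2366015 445223927 1248464495 (by norm_num) va1183007 (by norm_num)
  have va4732031 : 5 ^ 4732031 % 2422800383 = 47968081 := sqMulStep 2422800383 5 2366015 4732031 1248464495 47968081 (by norm_num) va2366015 (by norm_num)
  have va9464063 : 5 ^ 9464063 % 2422800383 = 1818635007 := sqMulStep 2422800383 5 4732031 9464063 47968081 1818635007 (by norm_num) va4732031 (by norm_num)
  have va18928127 : 5 ^ 18928127 % 2422800383 = 348018557 := sqMulStep 2422800383 5 9464063 18928127 1818635007 348018557 (by norm_num) va9464063 (by norm_num)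
  have va37856255 : 5 ^ 37856255 % 2422800383 = 1031272302 := sqMulStep 2422800383 5 18928127 37856255 348018557 1031272302 (by norm_num) va18928127 (by norm_num)
  have va75712511 : 5 ^ 75712511 % 2422800383 = 1097109321 := sqMulStep 2422800383 5 37856255 75712511 1031272302 1097109321 (by norm_num) va37856255 (by norm_num)
  have va151425023 : 5 ^ 151425023 % 2422800383 = 2184515644 := sqMulStep 2422800383 5 75712511 151425023 1097109321 2184515644 (by norm_num) va75712511 (by norm_num)
  have va302850047 : 5 ^ 302850047 % 2422800383 = 2251646442 := sqMulStep 2422800383 5 151425023 302850047 2184515644 2251646442 (by norm_num) va151425023 (by norm_num)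
  have va605700095 : 5 ^ 605700095 % 2422800383 = 442814891 := sqMulStep 2422800383 5 302850047 605700095 2251646442 442814891 (by norm_num) va302850047 (by norm_num)
  have va1211400191 : 5 ^ 1211400191 % 2422800383 = 2422800382 := sqMulStep 2422800383 5 605700095 1211400191 442814891 2422800382 (by norm_num) va605700095 (by norm_num)
  have vfull : 5 ^ 2422800382 % 2422800383 = 1 := sqStep 2422800383 5 1211400191 2422800382 2422800382 1 (by norm_num) va1211400191 (by norm_num)
  have goal2 : (5 : ZMod 2422800383) ^ ((2422800383 - 1) / 2) ≠ 1 := by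
    have he : (2422800383 - 1) / 2 = 1211400191 := by norm_num
    rw [he]
    exact zmodPowNe 2422800383 5 1211400191 2422800382 (by rw [va1211400191]) (by norm_num)
  have goalN : (5 : ZMod 2422800383) ^ ((2422800383 - 1) / 1211400191) ≠ 1 := by
    have he : (2422800383 - 1) / 1211400191 = 2 := by norm_num
    rw [he]
    exact zmodPowNe 2422800383 5 2 25 (by norm_num) (by norm_num)
  apply lucas_primality 2422800383 (5 : ZMod 2422800383)
  · have he : 2422800383 - 1 = 2422800382 := by norm_num
    rw [he]
    exact zmodPowEq 2422800383 5 2422800382 1 (by rw [vfull])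
  · intro q hq hd
    have hd' : q ∣ 2 * 1211400191 := by
      have he : 2422800383 - 1 = 2 * 1211400191 := by norm_num
      rwa [he] at hd
    rcases (Nat.Prime.dvd_mul hq).mp hd' with h | h
    · rw [(Nat.prime_dvd_prime_iff_eq hq (by norm_num)).mp h]; exact goal2
    · rw [(Nat.prime_dvd_prime_iff_eq hq pN).mp h]; exact goalN

lemma keyPow : 36969 ^ 1211400191 % 2422800383 = 1 := by
  have wa1 : 36969 ^ 1 % 2422800383 = 36969 := by norm_num
  have wa2 : 36969 ^ 2 % 2422800383 = 1366706961 := sqStep 2422800383 36969 1 2 36969 1366706961 (by norm_num) wa1 (by norm_num)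
  have wa4 : 36969 ^ 4 % 2422800383 = 1622469343 := sqStep 2422800383 36969 2 4 1366706961 1622469343 (by norm_num) wa2 (by norm_num)
  have wa9 : 36969 ^ 9 % 2422800383 = 775514752 := sqMulStep 2422800383 36969 4 9 1622469343 775514752 (by norm_num) wa4 (by norm_num)
  have wa18 : 36969 ^ 18 % 2422800383 = 1912931021 := sqStep 2422800383 36969 9 18 775514752 1912931021 (by norm_num) wa9 (by norm_num)
  have wa36 : 36969 ^ 36 % 2422800383 = 1742742233 := sqStep 2422800383 36969 18 36 1912931021 1742742233 (by norm_num) wa18 (by norm_num)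
  have wa72 : 36969 ^ 72 % 2422800383 = 1596019390 := sqStep 2422800383 36969 36 72 1742742233 1596019390 (by norm_num) wa36 (by norm_num)
  have wa144 : 36969 ^ 144 % 2422800383 = 1203176578 := sqStep 2422800383 36969 72 144 1596019390 1203176578 (by norm_num) wa72 (by norm_num)
  have wa288 : 36969 ^ 288 % 2422800383 = 797606799 := sqStep 2422800383 36969 144 288 1203176578 797606799 (by norm_num) wa144 (by norm_num)
  have wa577 : 36969 ^ 577 % 2422800383 = 731244727 := sqMulStep 2422800383 36969 288 577 797606799 731244727 (by norm_num) wa288 (by norm_num)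
  have wa1155 : 36969 ^ 1155 % 2422800383 = 2074191730 := sqMulStep 2422800383 36969 577 1155 731244727 2074191730 (by norm_num) wa577 (by norm_num)
  have wa2310 : 36969 ^ 2310 % 2422800383 = 1079943087 := sqStep 2422800383 36969 1155 2310 2074191730 1079943087 (by norm_num) wa1155 (by norm_num)
  have wa4621 : 36969 ^ 4621 % 2422800383 = 143857625 := sqMulStep 2422800383 36969 2310 4621 1079943087 143857625 (by norm_num) wa2310 (by norm_num)
  have wa9242 : 36969 ^ 9242 % 2422800383 = 529140800 := sqStep 2422800383 36969 4621 9242 143857625 529140800 (by norm_num) wa4621 (by norm_num)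
  have wa18484 : 36969 ^ 18484 % 2422800383 = 9793604 := sqStep 2422800383 36969 9242 18484 529140800 9793604 (by norm_num) wa9242 (by norm_num)
  have wa36968 : 36969 ^ 36968 % 2422800383 = 857746612 := sqStep 2422800383 36969 18484 36968 9793604 857746612 (by norm_num) wa18484 (by norm_num)
  have wa73937 : 36969 ^ 73937 % 2422800383 = 2398210039 := sqMulStep 2422800383 36969 36968 73937 857746612 2398210039 (by norm_num) wa36968 (by norm_num)
  have wa147875 : 36969 ^ 147875 % 2422800383 = 749325815 := sqMulStep 2422800383 36969 73937 147875 2398210039 749325815 (by norm_num) wa73937 (by norm_num)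
  have wa295751 : 36969 ^ 295751 % 2422800383 = 1875009756 := sqMulStep 2422800383 36969 147875 295751 749325815 1875009756 (by norm_num) wa147875 (by norm_num)
  have wa591503 : 36969 ^ 591503 % 2422800383 = 881761315 := sqMulStep 2422800383 36969 295751 591503 1875009756 881761315 (by norm_num) wa295751 (by norm_num)
  have wa1183007 : 36969 ^ 1183007 % 2422800383 = 936300448 := sqMulStep 2422800383 36969 591503 1183007 881761315 936300448 (by norm_num) wa591503 (by norm_num)
  have wa2366015 : 36969 ^ 2366015 % 2422800383 = 807364469 := sqMulStep 2422800383 36969 1183007 2366015 936300448 807364469 (by norm_num) wa1183007 (by norm_num)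
  have wa4732031 : 36969 ^ 4732031 % 2422800383 = 1519303887 := sqMulStep 2422800383 36969 2366015 4732031 807364469 1519303887 (by norm_num) wa2366015 (by norm_num)
  have wa9464063 : 36969 ^ 9464063 % 2422800383 = 611075191 := sqMulStep 2422800383 36969 4732031 9464063 1519303887 611075191 (by norm_num) wa4732031 (by norm_num)
  have wa18928127 : 36969 ^ 18928127 % 2422800383 = 455512096 := sqMulStep 2422800383 36969 9464063 18928127 611075191 455512096 (by norm_num) wa9464063 (by norm_num)
  have wa37856255 : 36969 ^ 37856255 % 2422800383 = 1926071230 := sqMulStep 2422800383 36969 18928127 37856255 455512096 1926071230 (by norm_num) wa18928127 (by norm_num)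
  have wa75712511 : 36969 ^ 75712511 % 2422800383 = 32768 := sqMulStep 2422800383 36969 37856255 75712511 1926071230 32768 (by norm_num) wa37856255 (by norm_num)
  have wa151425023 : 36969 ^ 151425023 % 2422800383 = 16384 := sqMulStep 2422800383 36969 75712511 151425023 32768 16384 (by norm_num) wa75712511 (by norm_num)
  have wa302850047 : 36969 ^ 302850047 % 2422800383 = 4096 := sqMulStep 2422800383 36969 151425023 302850047 16384 4096 (by norm_num) wa151425023 (by norm_num)
  have wa605700095 : 36969 ^ 605700095 % 2422800383 = 256 := sqMulStep 2422800383 36969 302850047 605700095 4096 256 (by norm_num) wa302850047 (by norm_num)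
  have wa1211400191 : 36969 ^ 1211400191 % 2422800383 = 1 := sqMulStep 2422800383 36969 605700095 1211400191 256 1 (by norm_num) wa605700095 (by norm_num)
  exact wa1211400191


/-- Every non-trivial state of the MWC generator with multiplier 36969 has
period exactly `1211400191 = (36969 * 2^16 - 2) / 2`. -/
theorem mwc36969_period (c w : ℕ) (hc : c < 36969) (hw : w < 2 ^ 16)
    (h0 : (c, w) ≠ (0, 0)) (h1 : (c, w) ≠ (36968, 65535)) :
    IsLeast {n : ℕ | 0 < n ∧ (F 36969)^[n] (c, w) = (c, w)}
      ((36969 * 2 ^ 16 - 2) / 2) ∧ (36969 * 2 ^ 16 - 2) / 2 = 1211400191 := by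
  have e2 : (36969 * 2 ^ 16 - 2) / 2 = 1211400191 := by norm_num
  refine ⟨?_, e2⟩
  rw [e2]
  haveI : Fact (Nat.Prime 2422800383) := ⟨pM⟩
  haveI : Fact (Nat.Prime 1211400191) := ⟨pN⟩
  simp only [Ne, Prod.mk.injEq, not_and] at h0 h1
  set x : ℕ := 65536 * c + w with hxdef
  have hx0 : 0 < x := by
    rcases Nat.eq_zero_or_pos c with h | h
    · have := h0 h; omega
    · omega
  have hxM : x < 2422800383 := by
    by_cases h : c = 36968
    · have := h1 h; omega
    · omega
  have iter : ∀ n : ℕ, (F 36969)^[n] (c, w) =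
      (36969 ^ n * x % 2422800383 / 65536, 36969 ^ n * x % 2422800383 % 65536) := by
    intro n
    induction n with
    | zero =>
      simp only [Function.iterate_zero, id_eq, pow_zero, one_mul]
      rw [Prod.mk.injEq]
      constructor <;> omega
    | succ n ih =>
      rw [Function.iterate_succ_apply', ih]
      have step1 : 36969 ^ (n + 1) * x % 2422800383 = 36969 * (36969 ^ n * x % 2422800383) % 2422800383 := by
        have hps : 36969 ^ (n + 1) * x = 36969 * (36969 ^ n * x) := by ring
        rw [hps]
        generalize 36969 ^ n * x = t
        omega
      rw [step1]
      have hy : 36969 ^ n * x % 2422800383 < 2422800383 := Nat.mod_lt _ (by norm_num)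
      generalize 36969 ^ n * x % 2422800383 = y at hy ⊢
      have he : y / 65536 + 36969 * (y % 65536) = 36969 * y % 2422800383 := by omega
      show ((y / 65536 + 36969 * (y % 65536)) / 2 ^ 16,
        (y / 65536 + 36969 * (y % 65536)) % 2 ^ 16) = _
      rw [he]
      norm_num
  constructor
  · refine ⟨by norm_num, ?_⟩
    rw [iter]
    have hm : 36969 ^ 1211400191 * x % 2422800383 = x := by
      rw [Nat.mul_mod, keyPow]
      omega
    rw [hm, Prod.mk.injEq]
    clear hm
    constructor <;> omega
  · rintro n ⟨hn, hfix⟩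
    rw [iter] at hfix
    rw [Prod.mk.injEq] at hfix
    obtain ⟨e1, f1⟩ := hfix
    have hmod : 36969 ^ n * x % 2422800383 = x % 2422800383 := by omega
    have hz : (36969 : ZMod 2422800383) ^ n * (x : ZMod 2422800383) = (x : ZMod 2422800383) := by
      have h2 : ((36969 ^ n * x : ℕ) : ZMod 2422800383) = ((x : ℕ) : ZMod 2422800383) :=
        (ZMod.natCast_eq_natCast_iff _ _ _).mpr hmod
      push_cast at h2
      exact h2
    have hxz : (x : ZMod 2422800383) ≠ 0 := by
      rw [Ne, ZMod.natCast_eq_zero_iff]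
      intro hd
      exact absurd (Nat.le_of_dvd hx0 hd) (not_le.mpr hxM)
    have hone : (36969 : ZMod 2422800383) ^ n = 1 :=
      mul_right_cancel₀ hxz (by rw [hz, one_mul])
    have hord : orderOf (36969 : ZMod 2422800383) = 1211400191 := by
      apply orderOf_eq_prime
      · exact zmodPowEq 2422800383 36969 1211400191 1 (by rw [keyPow])
      · intro hone1
        have := (ZMod.natCast_eq_natCast_iff 36969 1 2422800383).mp (by exact_mod_cast hone1)
        simp [Nat.ModEq] at this
    exact hord ▸ Nat.le_of_dvd hn (orderOf_dvd_of_pow_eq_one hone)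
end

section
/- Expected value of the chi-square statistic under a perturbed distribution: let k ≥ 1 and N ≥ 1 be natural numbers, let p : Fin k → ℝ with p_i > 0 for all i and ∑_i p_i = 1, let ε : Fin k → ℝ, and set q_i = p_i·(1 + ε_i); assume q_i ≥ 0 for all i and ∑_i q_i = 1. Let Y₁, …, Y_N be independent identically distributed random variables on a probability space, each taking values in Fin k with ℙ(Y_n = i) = q_i for all i, and for each i let z_i be the (random) number of indices n ∈ {1, …, N} with Y_n = i. Then the expectation of the chi-square statistic T = ∑_i (z_i − N·p_i)² / (N·p_i) equals (k − 1) + (N − 1)·∑_i p_i·ε_i² + ∑_i ε_i. -/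
/-!
Each count `z i` is a sum of `N` pairwise independent indicators of events of probability `q i`,
so `𝔼 z i = N q i` and `Var z i = N q i (1 - q i)`. Hence
`𝔼 (z i - N p i)² = N q i (1 - q i) + N² (q i - p i)²`, which after division by `N p i` and
substituting `q i = p i (1 + ε i)` becomes `(1 + ε i) - p i (1 + ε i)² + N p i (ε i)²`.
Summing over `i` and using `∑ i, p i ε i = 0` (from `∑ q = ∑ p = 1`) gives the formula.
-/

open MeasureTheory ProbabilityTheory Finset
open scoped ENNReal

lemma cast_card_filter_eq_sum_indicator {Ω ι α : Type*} [Fintype ι] [DecidableEq α]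
    (X : ι → Ω → α) (a : α) :
    (fun ω => (#{n | X n ω = a} : ℝ)) = ∑ n, (X n ⁻¹' {a}).indicator 1 := by
  ext ω
  rw [Finset.sum_apply, card_filter]
  push_cast
  simp [Set.indicator]

section
variable {Ω : Type*} [MeasurableSpace Ω] {μ : Measure Ω}

lemma integral_sub_const_sq [IsProbabilityMeasure μ] {X : Ω → ℝ} (hX : MemLp X 2 μ) (c : ℝ) :
    ∫ ω, (X ω - c) ^ 2 ∂μ = Var[X; μ] + (μ[X] - c) ^ 2 := by
  have hXc : MemLp (fun ω => X ω - c) 2 μ := hX.sub (memLp_const c)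
  have hmean : ∫ ω, (X ω - c) ∂μ = μ[X] - c := by
    simp [integral_sub (hX.integrable one_le_two) (integrable_const c)]
  rw [← variance_sub_const hX.aestronglyMeasurable c, variance_eq_sub hXc, hmean]
  simp only [Pi.pow_apply]
  ring

lemma memLp_indicator_one [IsFiniteMeasure μ] (p : ℝ≥0∞) {s : Set Ω} (hs : MeasurableSet s) :
    MemLp (s.indicator (1 : Ω → ℝ)) p μ :=
  memLp_indicator_const p hs 1 (Or.inr (measure_ne_top μ s))

lemma variance_indicator_one [IsProbabilityMeasure μ] {s : Set Ω} (hs : MeasurableSet s) :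
    Var[s.indicator 1; μ] = μ.real s * (1 - μ.real s) := by
  have hsq : s.indicator (1 : Ω → ℝ) ^ 2 = s.indicator 1 := by
    rw [sq, ← Set.inter_indicator_one, Set.inter_self]
  rw [variance_eq_sub (memLp_indicator_one 2 hs), hsq, integral_indicator_one hs]
  ring

variable {ι α : Type*} [Fintype ι] [DecidableEq α] [MeasurableSpace α]
  [MeasurableSingletonClass α] {X : ι → Ω → α}

lemma memLp_card_filter [IsFiniteMeasure μ] (p : ℝ≥0∞) (hX : ∀ n, Measurable (X n)) (a : α) :
    MemLp (fun ω => (#{n | X n ω = a} : ℝ)) p μ := by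
  rw [cast_card_filter_eq_sum_indicator]
  exact memLp_finsetSum' _ fun n _ => memLp_indicator_one p (hX n (measurableSet_singleton a))

theorem integral_card_filter_sub_sq [IsProbabilityMeasure μ] (hX : ∀ n, Measurable (X n))
    (hindep : Pairwise fun n m => IndepFun (X n) (X m) μ)
    {a : α} {r : ℝ} (hr : ∀ n, μ.real (X n ⁻¹' {a}) = r) (c : ℝ) :
    ∫ ω, ((#{n | X n ω = a} : ℝ) - c) ^ 2 ∂μ =
      Fintype.card ι * r * (1 - r) + (Fintype.card ι * r - c) ^ 2 := by
  have hE : ∀ n, MeasurableSet (X n ⁻¹' {a}) := fun n => hX n (measurableSet_singleton a)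
  have hpair : Set.Pairwise (univ : Finset ι) fun n m =>
      (X n ⁻¹' {a}).indicator (1 : Ω → ℝ) ⟂ᵢ[μ] (X m ⁻¹' {a}).indicator (1 : Ω → ℝ) := by
    intro n _ m _ hnm
    have hf : Measurable (({a} : Set α).indicator (1 : α → ℝ)) :=
      measurable_const.indicator (measurableSet_singleton a)
    exact (hindep hnm).comp hf hf
  have hvar : Var[∑ n, (X n ⁻¹' {a}).indicator 1; μ] = Fintype.card ι * (r * (1 - r)) := by
    rw [IndepFun.variance_sum (fun n _ => memLp_indicator_one 2 (hE n)) hpair]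
    simp [variance_indicator_one (hE _), hr]
  have hmean : μ[∑ n, (X n ⁻¹' {a}).indicator 1] = Fintype.card ι * r := by
    simp only [Finset.sum_apply]
    rw [integral_finsetSum _ fun n _ => (memLp_indicator_one 2 (hE n)).integrable one_le_two]
    simp [integral_indicator_one (hE _), hr]
  rw [integral_sub_const_sq (memLp_card_filter 2 hX a), cast_card_filter_eq_sum_indicator, hvar,
    hmean]
  ring

end

theorem chi_square_expectation_perturbed_general
    {Ω : Type*} [MeasurableSpace Ω] (μ : Measure Ω) [IsProbabilityMeasure μ]
    (k N : ℕ) (hN : 1 ≤ N)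
    (p : Fin k → ℝ) (hp : ∀ i, 0 < p i) (hpsum : ∑ i, p i = 1)
    (ε : Fin k → ℝ) (q : Fin k → ℝ) (hq : ∀ i, q i = p i * (1 + ε i))
    (hq0 : ∀ i, 0 ≤ q i) (hqsum : ∑ i, q i = 1)
    (Y : Fin N → Ω → Fin k)
    (hmeas : ∀ n, Measurable (Y n))
    (hindep : iIndepFun Y μ)
    (hdist : ∀ n i, μ {ω | Y n ω = i} = ENNReal.ofReal (q i))
    (z : Fin k → Ω → ℕ)
    (hz : ∀ i ω, z i ω = (Finset.univ.filter fun n : Fin N => Y n ω = i).card)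
    (T : Ω → ℝ)
    (hT : ∀ ω, T ω = ∑ i, ((z i ω : ℝ) - N * p i) ^ 2 / (N * p i)) :
    ∫ ω, T ω ∂μ =
      (k - 1 : ℝ) + (N - 1 : ℝ) * ∑ i, p i * ε i ^ 2 + ∑ i, ε i := by
  have hprob : ∀ n i, μ.real (Y n ⁻¹' {i}) = q i := fun n i => by
    simp [measureReal_def, Set.preimage, hdist, hq0]
  have hpair : Pairwise fun n m => IndepFun (Y n) (Y m) μ := fun _ _ => hindep.indepFun
  have hpε : ∑ i, p i * ε i = 0 := by
    simp only [hq, mul_add, mul_one, Finset.sum_add_distrib, hpsum] at hqsum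
    linarith
  have hterm : ∀ i, ∫ ω, ((z i ω : ℝ) - N * p i) ^ 2 / (N * p i) ∂μ =
      1 + ε i - p i - 2 * (p i * ε i) + (N - 1) * (p i * ε i ^ 2) := fun i => by
    have hN0 : (N : ℝ) ≠ 0 := Nat.cast_ne_zero.mpr (by omega)
    simp_rw [integral_div, hz, integral_card_filter_sub_sq hmeas hpair (hprob · i),
      Fintype.card_fin, hq]
    field_simp [hN0, (hp i).ne']
    ring
  have hint : ∀ i, Integrable (fun ω => ((z i ω : ℝ) - N * p i) ^ 2 / (N * p i)) μ := fun i => by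
    simp_rw [hz]
    exact (((memLp_card_filter 2 hmeas i).sub (memLp_const _)).integrable_sq).div_const _
  simp_rw [hT]
  rw [integral_finsetSum _ fun i _ => hint i, Finset.sum_congr rfl fun i _ => hterm i]
  simp only [Finset.sum_add_distrib, Finset.sum_sub_distrib, ← Finset.mul_sum, hpsum, hpε,
    Finset.sum_const, Finset.card_univ, Fintype.card_fin, nsmul_eq_mul, mul_one, mul_zero]
  ring

/-- Expected value of the chi-square statistic under a perturbed distribution:
if `Y₁, …, Y_N` are i.i.d. `Fin k`-valued with `μ(Yₙ = i) = q i = p i * (1 + ε i)`,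
`z i` counts the samples equal to `i`, and
`T = ∑ i, (z i − N * p i)² / (N * p i)` is the chi-square statistic with
reference probabilities `p`, then
`𝔼 T = (k − 1) + (N − 1) * ∑ i, p i * (ε i)² + ∑ i, ε i`. -/
theorem chi_square_expectation_perturbed
    {Ω : Type*} [MeasurableSpace Ω] (μ : Measure Ω) [IsProbabilityMeasure μ]
    (k N : ℕ) (hk : 1 ≤ k) (hN : 1 ≤ N)
    (p : Fin k → ℝ) (hp : ∀ i, 0 < p i) (hpsum : ∑ i, p i = 1)
    (ε : Fin k → ℝ) (q : Fin k → ℝ) (hq : ∀ i, q i = p i * (1 + ε i))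
    (hq0 : ∀ i, 0 ≤ q i) (hqsum : ∑ i, q i = 1)
    (Y : Fin N → Ω → Fin k)
    (hmeas : ∀ n, Measurable (Y n))
    (hindep : iIndepFun Y μ)
    (hident : ∀ n m, IdentDistrib (Y n) (Y m) μ μ)
    (hdist : ∀ n i, μ {ω | Y n ω = i} = ENNReal.ofReal (q i))
    (z : Fin k → Ω → ℕ)
    (hz : ∀ i ω, z i ω = (Finset.univ.filter fun n : Fin N => Y n ω = i).card)
    (T : Ω → ℝ)
    (hT : ∀ ω, T ω = ∑ i, ((z i ω : ℝ) - N * p i) ^ 2 / (N * p i)) :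
    ∫ ω, T ω ∂μ =
      (k - 1 : ℝ) + (N - 1 : ℝ) * ∑ i, p i * ε i ^ 2 + ∑ i, ε i :=
  chi_square_expectation_perturbed_general μ k N hN p hp hpsum ε q hq hq0 hqsum Y hmeas hindep hdist
    z hz T hT
end
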